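/- The 3×3 integer matrix Φ_T = [[2-g, -1, 1], [2(g-1), 1, 0], [g-1, 1, -1]] is periodic (of finite multiplicative order) for g = 2 (order 6), g = 3 (order 4), and g = 4 (order 6), but has infinite order for every g ≥ 5. -/

import Mathlib

/-- The Coxeter transformation matrix of the singularity category attached to a smooth
projective curve of genus `g`. -/
def PhiT (g : ℤ) : Matrix (Fin 3) (Fin 3) ℤ :=
  !![2 - g, -1, 1; 2 * (g - 1), 1, 0; g - 1, 1, -1]

/-!
For `g = 2, 3, 4` the orders are checked by computation. In general the characteristic polynomial
of `Φ = PhiT g` is `(x + 1)(x² + (g - 3)x + 1)`. For `g ≥ 6` the quadratic factor has real roots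
`λ, λ⁻¹` with `|λ| > 1`, so `tr Φⁿ - (-1)ⁿ = λⁿ + λ⁻ⁿ` grows strictly in absolute value; but if
`Φ^N = 1` it takes its initial value `2` again at `n = 2N`. For `g = 5` the characteristic
polynomial is `(x + 1)³`, so `-Φ = 1 + S` with `S ≠ 0` nilpotent, and a nontrivial unipotent
element of a torsion-free ring has infinite order.
-/

instance Matrix.instIsAddTorsionFree {m n α : Type*} [AddMonoid α] [IsAddTorsionFree α] :
    IsAddTorsionFree (Matrix m n α) :=
  inferInstanceAs (IsAddTorsionFree (m → n → α))

section Ring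

variable {R : Type*} [Ring R]

lemma one_add_pow_mul_of_mul_mul_eq_zero {S T : R} (h : S * (S * T) = 0) (n : ℕ) :
    (1 + S) ^ n * T = T + n • (S * T) := by
  induction n with
  | zero => simp
  | succ n ih =>
    rw [pow_succ', mul_assoc, ih, mul_add, mul_smul_comm, add_mul 1 S (S * T), one_mul, h,
      add_zero, add_mul, one_mul, succ_nsmul]
    abel

theorem IsNilpotent.eq_zero_of_one_add_pow_eq_one [IsAddTorsionFree R] {S : R}
    (hS : IsNilpotent S) {n : ℕ} (hn : n ≠ 0) (h : (1 + S) ^ n = 1) : S = 0 := by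
  by_contra hS0
  have : Nontrivial R := nontrivial_of_ne S 0 hS0
  obtain ⟨k, hk⟩ : ∃ k, nilpotencyClass S = k + 2 := by
    have h0 := pos_nilpotencyClass_iff.mpr hS
    have h1 := mt nilpotencyClass_eq_one.mp hS0
    exact ⟨nilpotencyClass S - 2, by omega⟩
  have hkill : S * (S * S ^ k) = 0 := by
    rw [← pow_succ', ← pow_succ', ← hk, pow_nilpotencyClass hS]
  have hpred : S ^ (k + 1) ≠ 0 := by
    simpa [hk] using pow_pred_nilpotencyClass hS
  have := one_add_pow_mul_of_mul_mul_eq_zero hkill n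
  rw [h, one_mul, left_eq_add, ← pow_succ', nsmul_eq_zero_iff] at this
  tauto

lemma pow_mul_eq_neg_one_pow_zsmul_of_mul_eq_neg {M Q : R} (h : M * Q = -Q) (n : ℕ) :
    M ^ n * Q = (-1 : ℤ) ^ n • Q := by
  induction n with
  | zero => simp
  | succ n ih => rw [pow_succ, mul_assoc, h, mul_neg, ih, pow_succ, mul_neg_one, neg_smul]

end Ring

lemma strictMono_abs_of_eq_mul_sub {c : ℤ} (hc : 3 ≤ |c|) {u : ℕ → ℤ}
    (hu : ∀ n, u (n + 2) = c * u (n + 1) - u n) (h01 : |u 0| < |u 1|) :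
    StrictMono fun n ↦ |u n| := by
  refine strictMono_nat_of_lt_succ fun n ↦ ?_
  induction n with
  | zero => exact h01
  | succ n ih =>
    calc |u (n + 1)| < 3 * |u (n + 1)| - |u n| := by linarith [abs_nonneg (u n)]
      _ ≤ |c| * |u (n + 1)| - |u n| := by nlinarith [abs_nonneg (u (n + 1))]
      _ ≤ |c * u (n + 1) - u n| := by rw [← abs_mul]; exact abs_sub_abs_le_abs_sub _ _
      _ = |u (n + 2)| := by rw [hu]

lemma PhiT_add_one_mul (g : ℤ) : (PhiT g + 1) * (PhiT g ^ 2 + (g - 3) • PhiT g + 1) = 0 := by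
  ext i j
  fin_cases i <;> fin_cases j <;>
    simp [PhiT, pow_two, Matrix.mul_apply, Fin.sum_univ_three, Matrix.one_apply] <;> ring

/-- `λⁿ + λ⁻ⁿ`, where `λ, λ⁻¹` are the roots of the quadratic factor `x² + (g - 3)x + 1` of the
characteristic polynomial of `PhiT g`. -/
def reducedTrace (g : ℤ) (n : ℕ) : ℤ := (PhiT g ^ n).trace - (-1) ^ n

lemma reducedTrace_zero (g : ℤ) : reducedTrace g 0 = 2 := by
  norm_num [reducedTrace]

lemma reducedTrace_one (g : ℤ) : reducedTrace g 1 = 3 - g := by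
  simp [reducedTrace, PhiT, Matrix.trace_fin_three]
  ring

lemma reducedTrace_add_two (g : ℤ) (n : ℕ) :
    reducedTrace g (n + 2) = (3 - g) * reducedTrace g (n + 1) - reducedTrace g n := by
  set Q := PhiT g ^ 2 + (g - 3) • PhiT g + 1
  have hQ : PhiT g * Q = -Q := by
    rw [← add_eq_zero_iff_eq_neg, ← PhiT_add_one_mul g, add_mul, one_mul]
  have htrQ : Q.trace = 5 - g := by
    simp [Q, PhiT, pow_two, Matrix.trace_fin_three]
    ring
  have h := congrArg Matrix.trace (pow_mul_eq_neg_one_pow_zsmul_of_mul_eq_neg hQ n)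
  simp only [Q, mul_add, mul_smul_comm, mul_one, ← pow_add, ← pow_succ, Matrix.trace_add,
    Matrix.trace_smul, htrQ, smul_eq_mul] at h
  simp only [reducedTrace]
  linear_combination h

lemma PhiT_pow_ne_one_of_six_le {g : ℤ} (hg : 6 ≤ g) {N : ℕ} (hN : N ≠ 0) :
    PhiT g ^ N ≠ 1 := by
  intro h
  have h01 : |reducedTrace g 0| < |reducedTrace g 1| := by
    rw [reducedTrace_zero, reducedTrace_one, abs_two, abs_of_nonpos (show 3 - g ≤ 0 by omega)]
    omega
  have hlt := strictMono_abs_of_eq_mul_sub (by rw [abs_of_nonpos] <;> omega)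
    (reducedTrace_add_two g) h01 (show 0 < 2 * N by omega)
  dsimp only at hlt
  rw [reducedTrace_zero, reducedTrace, (even_two_mul N).neg_one_pow, pow_mul', h] at hlt
  simp at hlt

lemma PhiT_five_add_one_pow_three : (PhiT 5 + 1) ^ 3 = 0 := by
  rw [pow_succ', ← PhiT_add_one_mul 5]
  congr 1
  noncomm_ring

lemma PhiT_five_pow_ne_one {N : ℕ} (hN : N ≠ 0) : PhiT 5 ^ N ≠ 1 := by
  intro h
  have hS : IsNilpotent (-(PhiT 5 + 1)) :=
    ⟨3, by rw [Odd.neg_pow (by decide), PhiT_five_add_one_pow_three, neg_zero]⟩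
  have hpow : (1 + -(PhiT 5 + 1)) ^ (2 * N) = 1 := by
    rw [show 1 + -(PhiT 5 + 1) = -PhiT 5 by abel, (even_two_mul N).neg_pow, pow_mul', h, one_pow]
  exact absurd (hS.eq_zero_of_one_add_pow_eq_one (by omega) hpow) (by decide)

/-- `Φ_T` has finite multiplicative order `6`, `4`, `6` for `g = 2, 3, 4`, respectively,
and infinite order for every `g ≥ 5`. -/
theorem PhiT_periodicity :
    orderOf (PhiT 2) = 6 ∧ orderOf (PhiT 3) = 4 ∧ orderOf (PhiT 4) = 6 ∧
    ∀ g : ℤ, 5 ≤ g → ∀ N : ℕ, 1 ≤ N → PhiT g ^ N ≠ 1 := by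
  refine ⟨?_, ?_, ?_, fun g hg N hN ↦ ?_⟩
  iterate 3 exact (orderOf_eq_iff (by norm_num)).2 ⟨by decide, by decide⟩
  obtain rfl | hg := hg.eq_or_lt
  · exact PhiT_five_pow_ne_one (by omega)
  · exact PhiT_pow_ne_one_of_six_le hg (by omega)
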